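/- arXiv:2604.01912 — 11 statements merged into one kernel-verified Lean document; each statement's English description precedes it below -/
import Mathlib

section
/- The preimage of the zero task under f is exactly the straight line through the origin spanned by c: for v ∈ ℝ^n, f(v) = 0 if and only if there exists t ∈ ℝ with v = t · c (componentwise v_i = t c_i). -/
lemma aux_sign_sqrt (x : ℝ) :
    (Real.sign x * Real.sqrt |x|) * abs (Real.sign x * Real.sqrt |x|) = x := by
  rcases lt_trichotomy x 0 with h|h|h
  · rw [Real.sign_of_neg h, abs_of_neg h]
    have h1 : (0:ℝ) ≤ Real.sqrt (-x) := Real.sqrt_nonneg _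
    have h2 := Real.sq_sqrt (by linarith : (0:ℝ) ≤ -x)
    rw [abs_of_nonpos (by nlinarith)]
    nlinarith
  · simp [h]
  · rw [Real.sign_of_pos h, abs_of_pos h]
    have h1 : (0:ℝ) ≤ Real.sqrt x := Real.sqrt_nonneg _
    have h2 := Real.sq_sqrt h.le
    rw [abs_of_nonneg (by nlinarith)]
    nlinarith

lemma aux_mulabs_inj {x y : ℝ} (h : x * |x| = y * |y|) : x = y := by
  rcases abs_cases x with ⟨hx, hx'⟩|⟨hx, hx'⟩ <;>
    rcases abs_cases y with ⟨hy, hy'⟩|⟨hy, hy'⟩ <;> nlinarith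

/-- The preimage of the zero task under f is exactly the straight line through the
origin spanned by c. -/
theorem stmt_1 (m : ℕ) (hm : 1 ≤ m)
    (A : Matrix (Fin m) (Fin (m + 1)) ℝ) (hrank : A.rank = m)
    (f : (Fin (m + 1) → ℝ) → Fin m → ℝ)
    (hf : ∀ v j, f v j = ∑ i, A j i * (v i * |v i|))
    (b : Fin (m + 1) → ℝ) (hb0 : b ≠ 0)
    (hbker : ∀ j, ∑ i, A j i * b i = 0)
    (hbi : ∀ i, b i ≠ 0)
    (c : Fin (m + 1) → ℝ)
    (hc : ∀ i, c i = Real.sign (b i) * Real.sqrt |b i|) :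
    ∀ v : Fin (m + 1) → ℝ, f v = 0 ↔ ∃ t : ℝ, ∀ i, v i = t * c i := by
  -- c i * |c i| = b i
  have hcb : ∀ i, c i * |c i| = b i := by
    intro i; rw [hc i]; exact aux_sign_sqrt (b i)
  intro v
  constructor
  · intro hv
    -- kernel argument
    set K := LinearMap.ker A.mulVecLin with hK
    have hbmem : b ∈ K := by
      simp only [hK, LinearMap.mem_ker, Matrix.mulVecLin_apply]
      funext j
      simpa [Matrix.mulVec, dotProduct] using hbker j
    have hfin : Module.finrank ℝ K = 1 := by
      have h1 := LinearMap.finrank_range_add_finrank_ker A.mulVecLin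
      have h2 : Module.finrank ℝ (LinearMap.range A.mulVecLin) = m := hrank
      rw [h2, Module.finrank_pi ℝ, Fintype.card_fin] at h1
      rw [hK]
      omega
    have hspan : Submodule.span ℝ {b} = K := by
      apply Submodule.eq_of_le_of_finrank_le
      · rwa [Submodule.span_singleton_le_iff_mem]
      · rw [hfin, finrank_span_singleton hb0]
    have hwmem : (fun i => v i * |v i|) ∈ K := by
      simp only [hK, LinearMap.mem_ker, Matrix.mulVecLin_apply]
      funext j
      have := congrFun hv j
      rw [hf v j] at this
      simpa [Matrix.mulVec, dotProduct] using this
    rw [← hspan] at hwmem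
    obtain ⟨s, hs⟩ := Submodule.mem_span_singleton.mp hwmem
    refine ⟨Real.sign s * Real.sqrt |s|, fun i => ?_⟩
    apply aux_mulabs_inj
    have hsi : v i * |v i| = s * b i := by
      have := congrFun hs i; simpa [Pi.smul_apply] using this.symm
    rw [hsi, ← hcb i]
    set t := Real.sign s * Real.sqrt |s| with ht
    have hts : t * |t| = s := aux_sign_sqrt s
    rw [abs_mul, mul_mul_mul_comm, hts]
  · rintro ⟨t, ht⟩
    funext j
    rw [hf v j]
    have : ∀ i, v i * |v i| = (t * |t|) * b i := by
      intro i
      rw [ht i, ← hcb i, abs_mul, mul_mul_mul_comm]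
    simp only [this]
    rw [show (0 : Fin m → ℝ) j = 0 from rfl]
    calc ∑ i, A j i * (t * |t| * b i) = (t * |t|) * ∑ i, A j i * b i := by
          rw [Finset.mul_sum]; apply Finset.sum_congr rfl; intros; ring
      _ = 0 := by rw [hbker j, mul_zero]
end

section
/- Asymptotic convergence of fibers: the Euclidean distance between the fiber through w and the central fiber vanishes as the null-space parameter diverges, i.e., lim_{|λ| → ∞} ‖γ(λ) − γ₀(λ)‖ = 0, where γ₀(λ)_i = sign(λ b_i) √|λ b_i| is the parameterization of the zero-task fiber. -/
/-!
Each coordinate of `γ λ - γ₀ λ` is `s (x₀ i + t) - s t` with `t = λ * b i` and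
`s x = sign x * √|x|`. Once `|t| > |x₀ i|` both arguments have the same sign, and rationalising
the difference of square roots bounds it by `|x₀ i| / √|t|`, which tends to `0` as `|λ| → ∞`
because `b i ≠ 0`.
-/

open Filter Topology Real

noncomputable def signedSqrt (x : ℝ) : ℝ := Real.sign x * √|x|

lemma abs_sqrt_sub_sqrt_le {u v : ℝ} (hu : 0 ≤ u) (hv : 0 < v) :
    |√u - √v| ≤ |u - v| / √v := by
  rw [le_div_iff₀ (sqrt_pos.2 hv)]
  have hprod : (√u - √v) * (√u + √v) = u - v := by
    linear_combination sq_sqrt hu - sq_sqrt hv.le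
  calc |√u - √v| * √v ≤ |√u - √v| * (√u + √v) := by
        gcongr; exact le_add_of_nonneg_left (sqrt_nonneg u)
    _ = |u - v| := by
        rw [← abs_of_nonneg (by positivity : 0 ≤ √u + √v), ← abs_mul, hprod]

lemma abs_sign_le_one (t : ℝ) : |Real.sign t| ≤ 1 := by
  rcases sign_apply_eq t with h | h | h <;> simp [h]

lemma sign_add_eq_sign {c t : ℝ} (h : |c| < |t|) : Real.sign (c + t) = Real.sign t := by
  rcases lt_trichotomy t 0 with ht | rfl | ht
  · rw [abs_of_neg ht] at h
    rw [sign_of_neg ht, sign_of_neg (by linarith [le_abs_self c])]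
  · exact absurd h (by simp)
  · rw [abs_of_pos ht] at h
    rw [sign_of_pos ht, sign_of_pos (by linarith [neg_abs_le c])]

lemma abs_signedSqrt_add_sub_le {c t : ℝ} (h : |c| < |t|) :
    |signedSqrt (c + t) - signedSqrt t| ≤ |c| / √|t| := by
  have ht : 0 < |t| := (abs_nonneg c).trans_lt h
  calc |signedSqrt (c + t) - signedSqrt t| = |Real.sign t| * |(√|c + t| - √|t|)| := by
        rw [signedSqrt, signedSqrt, sign_add_eq_sign h, ← mul_sub, abs_mul]
    _ ≤ 1 * (|(|c + t| - |t|)| / √|t|) :=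
        mul_le_mul (abs_sign_le_one t) (abs_sqrt_sub_sqrt_le (abs_nonneg _) ht)
          (abs_nonneg _) zero_le_one
    _ ≤ |c| / √|t| := by
        rw [one_mul]
        exact div_le_div_of_nonneg_right (by simpa using abs_abs_sub_abs_le_abs_sub (c + t) t)
          (sqrt_nonneg _)

lemma tendsto_signedSqrt_add_sub (c : ℝ) :
    Tendsto (fun t => signedSqrt (c + t) - signedSqrt t) (atBot ⊔ atTop) (𝓝 0) := by
  rw [← comap_abs_atTop]
  have habs : Tendsto (|·|) (comap (|·|) atTop) (atTop : Filter ℝ) := tendsto_comap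
  refine squeeze_zero_norm' ?_
    ((tendsto_const_nhds (x := |c|)).div_atTop (tendsto_sqrt_atTop.comp habs))
  filter_upwards [habs.eventually_gt_atTop |c|] with t ht
  exact abs_signedSqrt_add_sub_le ht

lemma tendsto_mul_const_atBot_sup_atTop {b : ℝ} (hb : b ≠ 0) :
    Tendsto (· * b) (atBot ⊔ atTop) (atBot ⊔ atTop) := by
  rw [← comap_abs_atTop, tendsto_comap_iff]
  simpa only [Function.comp_def, abs_mul] using
    (tendsto_comap (f := (|·|))).atTop_mul_const (abs_pos.2 hb)

theorem stmt_2_general (m : ℕ)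
    (b : Fin (m + 1) → ℝ)
    (hbi : ∀ i, b i ≠ 0)
    (x₀ : Fin (m + 1) → ℝ)
    (γ : ℝ → Fin (m + 1) → ℝ)
    (hγ : ∀ lam i, γ lam i =
      Real.sign (x₀ i + lam * b i) * Real.sqrt |x₀ i + lam * b i|)
    (γ₀ : ℝ → Fin (m + 1) → ℝ)
    (hγ₀ : ∀ lam i, γ₀ lam i = Real.sign (lam * b i) * Real.sqrt |lam * b i|) :
    Filter.Tendsto (fun lam : ℝ => Real.sqrt (∑ i, (γ lam i - γ₀ lam i) ^ 2))
      (Filter.atBot ⊔ Filter.atTop) (nhds 0) := by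
  have hcoord : ∀ i, Tendsto (fun lam => γ lam i - γ₀ lam i) (atBot ⊔ atTop) (𝓝 0) := fun i => by
    simpa only [hγ, hγ₀, signedSqrt, Function.comp_def] using
      (tendsto_signedSqrt_add_sub (x₀ i)).comp (tendsto_mul_const_atBot_sup_atTop (hbi i))
  have hsum : Tendsto (fun lam => ∑ i, (γ lam i - γ₀ lam i) ^ 2) (atBot ⊔ atTop) (𝓝 0) := by
    simpa using tendsto_finsetSum Finset.univ fun i _ => (hcoord i).pow 2
  simpa using hsum.sqrt

/-- Asymptotic convergence of fibers: the Euclidean distance between the fiber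
through w and the central fiber vanishes as the null-space parameter diverges. -/
theorem stmt_2 (m : ℕ) (hm : 1 ≤ m)
    (A : Matrix (Fin m) (Fin (m + 1)) ℝ)
    (f : (Fin (m + 1) → ℝ) → Fin m → ℝ)
    (hf : ∀ v j, f v j = ∑ i, A j i * (v i * |v i|))
    (b : Fin (m + 1) → ℝ) (hb0 : b ≠ 0)
    (hbker : ∀ j, ∑ i, A j i * b i = 0)
    (hbi : ∀ i, b i ≠ 0)
    (w : Fin m → ℝ) (x₀ : Fin (m + 1) → ℝ)
    (hx₀ : ∀ j, ∑ i, A j i * x₀ i = w j)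
    (γ : ℝ → Fin (m + 1) → ℝ)
    (hγ : ∀ lam i, γ lam i =
      Real.sign (x₀ i + lam * b i) * Real.sqrt |x₀ i + lam * b i|)
    (γ₀ : ℝ → Fin (m + 1) → ℝ)
    (hγ₀ : ∀ lam i, γ₀ lam i = Real.sign (lam * b i) * Real.sqrt |lam * b i|) :
    Filter.Tendsto (fun lam : ℝ => Real.sqrt (∑ i, (γ lam i - γ₀ lam i) ^ 2))
      (Filter.atBot ⊔ Filter.atTop) (nhds 0) :=
  stmt_2_general m b hbi x₀ γ hγ γ₀ hγ₀
end

section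
/- Orthant traversal count: suppose the n critical parameters λ_i* = −x₀_i / b_i are pairwise distinct. Then the sign-pattern map λ ↦ (sign(γ(λ)_1), …, sign(γ(λ)_n)) ∈ {−1, 1}^n, restricted to ℝ \ {λ_1*, …, λ_n*}, takes exactly n + 1 distinct values; that is, the fiber traverses exactly n + 1 distinct orthants of ℝ^n. -/
private lemma sign_sign_mul_sqrt (t : ℝ) (ht : t ≠ 0) :
    Real.sign (Real.sign t * Real.sqrt |t|) = Real.sign t := by
  have hs : 0 < Real.sqrt |t| := Real.sqrt_pos.mpr (abs_pos.mpr ht)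
  rcases ht.lt_or_gt with h | h
  · rw [Real.sign_of_neg h, Real.sign_of_neg (by nlinarith [Real.sign_of_neg h])]
  · rw [Real.sign_of_pos h, Real.sign_of_pos (by nlinarith [Real.sign_of_pos h])]

private lemma exists_count (T : Finset ℝ) :
    ∀ k ≤ T.card, ∃ l, l ∉ T ∧ (T.filter (fun t => t < l)).card = k := by
  intro k
  induction k with
  | zero =>
    intro _
    rcases T.eq_empty_or_nonempty with rfl | hT
    · exact ⟨0, by simp, by simp⟩
    · refine ⟨T.min' hT - 1, fun hmem => ?_, ?_⟩
      · have := T.min'_le _ hmem; linarith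
      · rw [Finset.card_eq_zero, Finset.filter_eq_empty_iff]
        intro t ht
        have := T.min'_le t ht
        push_neg
        linarith
  | succ k ih =>
    intro hk
    obtain ⟨l, hl, hcard⟩ := ih (le_of_lt (Nat.lt_of_succ_le hk))
    set U := T.filter (fun t => l < t) with hU
    have hfneg : T.filter (fun t => ¬ t < l) = U := by
      rw [hU]
      apply Finset.filter_congr
      intro t ht
      simp only [not_lt]
      constructor
      · intro h; rcases lt_or_eq_of_le h with h' | h'
        · exact h'
        · exact absurd (h' ▸ ht) hl
      · intro h; exact h.le
    have hsplit : (T.filter (fun t => t < l)).card + U.card = T.card := by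
      rw [← hfneg]
      exact Finset.card_filter_add_card_filter_not (p := fun t => t < l)
    have hUne : U.Nonempty := by
      rw [← Finset.card_pos]; omega
    set a := U.min' hUne with ha
    have haT : a ∈ T := (Finset.mem_filter.mp (U.min'_mem hUne)).1
    have hla : l < a := (Finset.mem_filter.mp (U.min'_mem hUne)).2
    set V := T.filter (fun t => a < t) with hV
    obtain ⟨l', hal', hl'V⟩ : ∃ l', a < l' ∧ ∀ t ∈ V, l' < t := by
      rcases V.eq_empty_or_nonempty with hVe | hVne
      · exact ⟨a + 1, by linarith, by simp [hVe]⟩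
      · refine ⟨(a + V.min' hVne) / 2, ?_, ?_⟩
        · have : a < V.min' hVne := (Finset.mem_filter.mp (V.min'_mem hVne)).2
          linarith
        · intro t ht
          have h1 : a < t := (Finset.mem_filter.mp ht).2
          have := V.min'_le t ht
          linarith
    have hl'T : l' ∉ T := by
      intro hmem
      rcases lt_trichotomy l' a with h | h | h
      · linarith
      · rw [h] at hal'; exact lt_irrefl _ hal'
      · have : l' ∈ V := Finset.mem_filter.mpr ⟨hmem, h⟩
        exact absurd (hl'V _ this) (lt_irrefl _)
    refine ⟨l', hl'T, ?_⟩
    have hfe : T.filter (fun t => t < l') = insert a (T.filter (fun t => t < l)) := by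
      ext t
      simp only [Finset.mem_filter, Finset.mem_insert]
      constructor
      · rintro ⟨htT, htl'⟩
        rcases lt_trichotomy t l with h | h | h
        · exact Or.inr ⟨htT, h⟩
        · exact absurd (h ▸ htT) hl
        · have htU : t ∈ U := Finset.mem_filter.mpr ⟨htT, h⟩
          have hat : a ≤ t := U.min'_le t htU
          rcases eq_or_lt_of_le hat with he | hlt
          · exact Or.inl he.symm
          · exact absurd htl' (not_lt.mpr (le_of_lt (hl'V t (Finset.mem_filter.mpr ⟨htT, hlt⟩))))
      · rintro (rfl | ⟨htT, htl⟩)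
        · exact ⟨haT, hal'⟩
        · exact ⟨htT, by linarith⟩
    rw [hfe, Finset.card_insert_of_notMem, hcard]
    simp only [Finset.mem_filter]
    rintro ⟨-, h⟩
    linarith

/-- Orthant traversal count: if the critical parameters λ_i* are pairwise
distinct, the sign-pattern map restricted to ℝ \ {λ_1*, …, λ_n*} takes exactly
n + 1 distinct values (here n = m + 1). -/
theorem stmt_8 (m : ℕ) (hm : 1 ≤ m)
    (A : Matrix (Fin m) (Fin (m + 1)) ℝ)
    (b : Fin (m + 1) → ℝ) (hb0 : b ≠ 0)
    (hbker : ∀ j, ∑ i, A j i * b i = 0)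
    (hbi : ∀ i, b i ≠ 0)
    (w : Fin m → ℝ) (x₀ : Fin (m + 1) → ℝ)
    (hx₀ : ∀ j, ∑ i, A j i * x₀ i = w j)
    (γ : ℝ → Fin (m + 1) → ℝ)
    (hγ : ∀ lam i, γ lam i =
      Real.sign (x₀ i + lam * b i) * Real.sqrt |x₀ i + lam * b i|)
    (lamStar : Fin (m + 1) → ℝ) (hls : ∀ i, lamStar i = -x₀ i / b i)
    (hinj : Function.Injective lamStar) :
    ((fun lam : ℝ => fun i => Real.sign (γ lam i)) ''
      {lam : ℝ | ∀ i, lam ≠ lamStar i}).ncard = (m + 1) + 1 := by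
  set S : Set ℝ := {lam : ℝ | ∀ i, lam ≠ lamStar i} with hS
  set Q : ℝ → Fin (m + 1) → ℝ :=
    fun lam i => Real.sign (b i * (lam - lamStar i)) with hQ
  have hfact : ∀ (lam : ℝ) (i : Fin (m + 1)),
      x₀ i + lam * b i = b i * (lam - lamStar i) := by
    intro lam i
    rw [hls]
    field_simp [hbi i]
    ring
  -- rewrite the image as Q '' S
  have himg : ((fun lam : ℝ => fun i => Real.sign (γ lam i)) '' S) = Q '' S := by
    apply Set.image_congr
    intro lam hlam
    funext i
    have hne : b i * (lam - lamStar i) ≠ 0 :=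
      mul_ne_zero (hbi i) (sub_ne_zero.mpr (hlam i))
    rw [hγ, hfact, sign_sign_mul_sqrt _ hne]
  -- closed form for Q on S
  have hQform : ∀ lam ∈ S, ∀ i, Q lam i =
      if lamStar i < lam then Real.sign (b i) else -Real.sign (b i) := by
    intro lam hlam i
    show Real.sign (b i * (lam - lamStar i)) = _
    rcases (hlam i).lt_or_gt with h | h
    · rw [if_neg (not_lt.mpr h.le)]
      rcases (hbi i).lt_or_gt with hb | hb
      · rw [Real.sign_of_neg hb,
          Real.sign_of_pos (show (0:ℝ) < b i * (lam - lamStar i) by nlinarith)]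
        norm_num
      · rw [Real.sign_of_pos hb,
          Real.sign_of_neg (show b i * (lam - lamStar i) < 0 by nlinarith)]
    · rw [if_pos h]
      rcases (hbi i).lt_or_gt with hb | hb
      · rw [Real.sign_of_neg hb,
          Real.sign_of_neg (show b i * (lam - lamStar i) < 0 by nlinarith)]
      · rw [Real.sign_of_pos hb,
          Real.sign_of_pos (show (0:ℝ) < b i * (lam - lamStar i) by nlinarith)]
  set N : ℝ → ℕ :=
    fun lam => (Finset.univ.filter (fun i : Fin (m + 1) => lamStar i < lam)).card with hN
  set c : (Fin (m + 1) → ℝ) → ℕ :=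
    fun p => (Finset.univ.filter (fun i : Fin (m + 1) => p i = Real.sign (b i))).card with hc
  have hsgnne : ∀ i : Fin (m + 1), Real.sign (b i) ≠ 0 := by
    intro i h
    exact hbi i (Real.sign_eq_zero_iff.mp h)
  have hcQ : ∀ lam ∈ S, c (Q lam) = N lam := by
    intro lam hlam
    show (Finset.univ.filter (fun i : Fin (m + 1) => Q lam i = Real.sign (b i))).card
      = (Finset.univ.filter (fun i : Fin (m + 1) => lamStar i < lam)).card
    congr 1
    apply Finset.filter_congr
    intro i _
    rw [hQform lam hlam i]
    by_cases h : lamStar i < lam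
    · simp [h]
    · simp only [h, if_false, iff_false]
      intro he
      have : Real.sign (b i) = 0 := by linarith [he]
      exact hsgnne i this
  -- N determines Q on S
  have hQofN : ∀ lam ∈ S, ∀ mu ∈ S, N lam = N mu → Q lam = Q mu := by
    have key : ∀ lam ∈ S, ∀ mu ∈ S, lam ≤ mu → N lam = N mu → Q lam = Q mu := by
      intro lam hlam mu hmu hle hNe
      have hsub : Finset.univ.filter (fun i : Fin (m + 1) => lamStar i < lam) ⊆
          Finset.univ.filter (fun i : Fin (m + 1) => lamStar i < mu) := by
        intro i hi
        simp only [Finset.mem_filter, Finset.mem_univ, true_and] at hi ⊢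
        linarith
      have hset := Finset.eq_of_subset_of_card_le hsub (le_of_eq hNe.symm)
      funext i
      rw [hQform lam hlam i, hQform mu hmu i]
      have hiff : (lamStar i < lam) ↔ (lamStar i < mu) := by
        have := Finset.ext_iff.mp hset i
        simpa using this
      simp only [hiff]
    intro lam hlam mu hmu hNe
    rcases le_total lam mu with h | h
    · exact key lam hlam mu hmu h hNe
    · exact (key mu hmu lam hlam h hNe.symm).symm
  have hinjOn : Set.InjOn c (Q '' S) := by
    rintro p ⟨lam, hlam, rfl⟩ q ⟨mu, hmu, rfl⟩ h
    rw [hcQ lam hlam, hcQ mu hmu] at h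
    exact hQofN lam hlam mu hmu h
  have himage : c '' (Q '' S) = Set.Iic (m + 1) := by
    ext k
    constructor
    · rintro ⟨p, ⟨lam, hlam, rfl⟩, rfl⟩
      simp only [Set.mem_Iic]
      rw [hcQ lam hlam]
      exact le_trans (Finset.card_filter_le _ _) (le_of_eq (by simp))
    · intro hk
      simp only [Set.mem_Iic] at hk
      set T : Finset ℝ := Finset.univ.image lamStar with hT
      have hTcard : T.card = m + 1 := by
        rw [hT, Finset.card_image_of_injective _ hinj]
        simp
      obtain ⟨l, hlT, hlcard⟩ := exists_count T k (by omega)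
      have hlS : l ∈ S := by
        intro i hli
        exact hlT (by rw [hT, hli]; exact Finset.mem_image_of_mem _ (Finset.mem_univ i))
      have hNl : N l = k := by
        show (Finset.univ.filter (fun i : Fin (m + 1) => lamStar i < l)).card = k
        rw [← hlcard, hT, Finset.filter_image, Finset.card_image_of_injective _ hinj]
      refine ⟨Q l, ⟨l, hlS, rfl⟩, ?_⟩
      rw [hcQ l hlS, hNl]
  rw [himg, ← Set.ncard_image_of_injOn hinjOn, himage]
  rw [← Finset.coe_Iic, Set.ncard_coe_finset, Nat.card_Iic]
end

section
/- Strict forward progression: for every λ ∈ ℝ such that x₀_i + λ b_i ≠ 0 for all i, the inner product of the parametric tangent vector of the fiber with the central fiber direction is strictly positive: Σ_{i=1}^n (b_i / (2 √|x₀_i + λ b_i|)) · c_i > 0. -/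
/-- Strict forward progression: the inner product of the parametric tangent
vector of the fiber with the central fiber direction is strictly positive. -/
theorem stmt_9 (m : ℕ) (hm : 1 ≤ m)
    (A : Matrix (Fin m) (Fin (m + 1)) ℝ)
    (b : Fin (m + 1) → ℝ) (hb0 : b ≠ 0)
    (hbker : ∀ j, ∑ i, A j i * b i = 0)
    (hbi : ∀ i, b i ≠ 0)
    (c : Fin (m + 1) → ℝ)
    (hc : ∀ i, c i = Real.sign (b i) * Real.sqrt |b i|)
    (w : Fin m → ℝ) (x₀ : Fin (m + 1) → ℝ)
    (hx₀ : ∀ j, ∑ i, A j i * x₀ i = w j) :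
    ∀ lam : ℝ, (∀ i, x₀ i + lam * b i ≠ 0) →
      0 < ∑ i, (b i / (2 * Real.sqrt |x₀ i + lam * b i|)) * c i := by
  intro lam hlam
  apply Finset.sum_pos
  · intro i _
    have hden : 0 < 2 * Real.sqrt |x₀ i + lam * b i| := by
      have : 0 < |x₀ i + lam * b i| := abs_pos.mpr (hlam i)
      positivity
    rw [hc i]
    have hbc : 0 < b i * (Real.sign (b i) * Real.sqrt |b i|) := by
      have hs : 0 < Real.sqrt |b i| := Real.sqrt_pos.mpr (abs_pos.mpr (hbi i))
      rcases (hbi i).lt_or_gt with h | h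
      · rw [Real.sign_of_neg h]
        nlinarith
      · rw [Real.sign_of_pos h]
        nlinarith
    rw [div_mul_eq_mul_div]
    have := div_pos (by linarith [hbc] : (0:ℝ) < b i * (Real.sign (b i) * Real.sqrt |b i|)) hden
    calc (0:ℝ) < b i * (Real.sign (b i) * Real.sqrt |b i|) / (2 * Real.sqrt |x₀ i + lam * b i|) := this
      _ = b i * (Real.sign (b i) * Real.sqrt |b i|) / (2 * Real.sqrt |x₀ i + lam * b i|) := rfl
  · exact Finset.univ_nonempty
end

section
/- Surjectivity of the extremal orthants: for every w ∈ ℝ^m there exists v ∈ ℝ^n with f(v) = w and sign(v_i) = sign(b_i) for all i (v lies in the open positive extremal orthant), and likewise there exists v′ ∈ ℝ^n with f(v′) = w and sign(v′_i) = −sign(b_i) for all i. -/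
noncomputable def gsq (x : ℝ) : ℝ := Real.sign x * Real.sqrt |x|

lemma gsq_spec (x : ℝ) : gsq x * |gsq x| = x ∧ Real.sign (gsq x) = Real.sign x := by
  rcases lt_trichotomy x 0 with h | h | h
  · have hs : Real.sign x = -1 := Real.sign_of_neg h
    have habs : |x| = -x := abs_of_neg h
    have hpos : 0 < Real.sqrt |x| := Real.sqrt_pos.mpr (by rw [habs]; linarith)
    have hg : gsq x = -Real.sqrt |x| := by simp [gsq, hs]
    constructor
    · rw [hg, abs_neg, abs_of_pos hpos, neg_mul, Real.mul_self_sqrt (abs_nonneg x), habs]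
      ring
    · rw [hg, hs, Real.sign_of_neg (by linarith)]
  · subst h; simp [gsq]
  · have hs : Real.sign x = 1 := Real.sign_of_pos h
    have habs : |x| = x := abs_of_pos h
    have hpos : 0 < Real.sqrt |x| := Real.sqrt_pos.mpr (by rw [habs]; exact h)
    have hg : gsq x = Real.sqrt |x| := by simp [gsq, hs]
    constructor
    · rw [hg, abs_of_pos hpos, Real.mul_self_sqrt (abs_nonneg x), habs]
    · rw [hg, hs, Real.sign_of_pos hpos]

lemma key_orthant (m : ℕ) (A : Matrix (Fin m) (Fin (m + 1)) ℝ)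
    (hsurj : ∀ w : Fin m → ℝ, ∃ u : Fin (m + 1) → ℝ, ∀ j, ∑ i, A j i * u i = w j)
    (b : Fin (m + 1) → ℝ) (hbker : ∀ j, ∑ i, A j i * b i = 0)
    (hbi : ∀ i, b i ≠ 0) (w : Fin m → ℝ) :
    ∃ v : Fin (m + 1) → ℝ, (∀ j, ∑ i, A j i * (v i * |v i|) = w j) ∧
      ∀ i, Real.sign (v i) = Real.sign (b i) := by
  obtain ⟨u0, hu0⟩ := hsurj w
  set t : ℝ := 1 + ∑ i, |u0 i| / |b i| with ht
  have hterm : ∀ i, |u0 i| < t * |b i| := by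
    intro i
    have hbpos : 0 < |b i| := abs_pos.mpr (hbi i)
    have h1 : |u0 i| / |b i| ≤ ∑ j, |u0 j| / |b j| :=
      Finset.single_le_sum (f := fun j => |u0 j| / |b j|)
        (fun j _ => div_nonneg (abs_nonneg _) (abs_nonneg _)) (Finset.mem_univ i)
    have h2 : |u0 i| / |b i| < t := by rw [ht]; linarith
    calc |u0 i| = (|u0 i| / |b i|) * |b i| := by field_simp
    _ < t * |b i| := mul_lt_mul_of_pos_right h2 hbpos
  set u : Fin (m + 1) → ℝ := fun i => u0 i + t * b i with hu
  have hsign : ∀ i, Real.sign (u i) = Real.sign (b i) := by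
    intro i
    have h2 := hterm i
    rcases (hbi i).lt_or_gt with h | h
    · rw [abs_of_neg h] at h2
      have hneg : u i < 0 := by
        have := le_abs_self (u0 i)
        simp only [hu]
        nlinarith
      rw [Real.sign_of_neg hneg, Real.sign_of_neg h]
    · rw [abs_of_pos h] at h2
      have hpos : 0 < u i := by
        have := neg_abs_le (u0 i)
        simp only [hu]
        nlinarith
      rw [Real.sign_of_pos hpos, Real.sign_of_pos h]
  have hAu : ∀ j, ∑ i, A j i * u i = w j := by
    intro j
    simp only [hu, mul_add]
    rw [Finset.sum_add_distrib]
    have h3 : ∑ i, A j i * (t * b i) = t * ∑ i, A j i * b i := by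
      rw [Finset.mul_sum]; apply Finset.sum_congr rfl; intro i _; ring
    rw [h3, hbker, hu0 j]; ring
  refine ⟨fun i => gsq (u i), fun j => ?_, fun i => ?_⟩
  · rw [← hAu j]
    apply Finset.sum_congr rfl
    intro i _
    rw [(gsq_spec (u i)).1]
  · rw [(gsq_spec (u i)).2, hsign]

/-- Surjectivity of the extremal orthants: every task w is achieved in the open
positive extremal orthant and in the open negative extremal orthant. -/
theorem stmt_10 (m : ℕ) (hm : 1 ≤ m)
    (A : Matrix (Fin m) (Fin (m + 1)) ℝ) (hrank : A.rank = m)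
    (f : (Fin (m + 1) → ℝ) → Fin m → ℝ)
    (hf : ∀ v j, f v j = ∑ i, A j i * (v i * |v i|))
    (b : Fin (m + 1) → ℝ) (hb0 : b ≠ 0)
    (hbker : ∀ j, ∑ i, A j i * b i = 0)
    (hbi : ∀ i, b i ≠ 0) :
    ∀ w : Fin m → ℝ,
      (∃ v : Fin (m + 1) → ℝ, f v = w ∧
        ∀ i, Real.sign (v i) = Real.sign (b i)) ∧
      (∃ v' : Fin (m + 1) → ℝ, f v' = w ∧
        ∀ i, Real.sign (v' i) = -Real.sign (b i)) := by
  have hsurj : ∀ w : Fin m → ℝ, ∃ u : Fin (m + 1) → ℝ, ∀ j, ∑ i, A j i * u i = w j := by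
    have htop : LinearMap.range A.mulVecLin = ⊤ := by
      apply Submodule.eq_top_of_finrank_eq
      show A.rank = _
      rw [hrank, Module.finrank_fintype_fun_eq_card, Fintype.card_fin]
    intro w
    have : w ∈ LinearMap.range A.mulVecLin := htop ▸ Submodule.mem_top
    obtain ⟨u, huw⟩ := this
    refine ⟨u, fun j => ?_⟩
    have := congrFun huw j
    simpa [Matrix.mulVecLin, Matrix.mulVec, dotProduct] using this
  intro w
  constructor
  · obtain ⟨v, hv1, hv2⟩ := key_orthant m A hsurj b hbker hbi w
    exact ⟨v, funext fun j => by rw [hf]; exact hv1 j, hv2⟩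
  · obtain ⟨v, hv1, hv2⟩ := key_orthant m A hsurj (fun i => -b i)
      (fun j => by simpa using hbker j) (fun i => neg_ne_zero.mpr (hbi i)) w
    refine ⟨v, funext fun j => by rw [hf]; exact hv1 j, fun i => ?_⟩
    rw [hv2 i]
    exact Real.sign_neg
end

section
/- Zero task excluded from transitional orthants: if v ∈ ℝ^n satisfies v_i ≠ 0 for all i and f(v) = 0, then either sign(v_i) = sign(b_i) for all i, or sign(v_i) = −sign(b_i) for all i; in particular, the zero task is not in the image of the interior of any transitional orthant. -/
open FiniteDimensional

lemma sign_mul_pos_left (c x : ℝ) (hc : 0 < c) : Real.sign (c * x) = Real.sign x := by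
  rcases lt_trichotomy x 0 with h | h | h
  · rw [Real.sign_of_neg h, Real.sign_of_neg (mul_neg_of_pos_of_neg hc h)]
  · simp [h]
  · rw [Real.sign_of_pos h, Real.sign_of_pos (mul_pos hc h)]

lemma sign_self_mul_abs (x : ℝ) : Real.sign (x * |x|) = Real.sign x := by
  rcases lt_trichotomy x 0 with h | h | h
  · rw [Real.sign_of_neg h, Real.sign_of_neg (mul_neg_of_neg_of_pos h (abs_pos.mpr h.ne))]
  · simp [h]
  · rw [Real.sign_of_pos h, Real.sign_of_pos (mul_pos h (abs_pos.mpr h.ne'))]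

/-- Zero task excluded from transitional orthants: a regular zero of f must lie
in one of the two extremal orthants. -/
theorem stmt_11 (m : ℕ) (hm : 1 ≤ m)
    (A : Matrix (Fin m) (Fin (m + 1)) ℝ) (hrank : A.rank = m)
    (f : (Fin (m + 1) → ℝ) → Fin m → ℝ)
    (hf : ∀ v j, f v j = ∑ i, A j i * (v i * |v i|))
    (b : Fin (m + 1) → ℝ) (hb0 : b ≠ 0)
    (hbker : ∀ j, ∑ i, A j i * b i = 0)
    (hbi : ∀ i, b i ≠ 0) :
    ∀ v : Fin (m + 1) → ℝ, (∀ i, v i ≠ 0) → f v = 0 →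
      (∀ i, Real.sign (v i) = Real.sign (b i)) ∨
      (∀ i, Real.sign (v i) = -Real.sign (b i)) := by
  intro v hv hfv
  set w : Fin (m + 1) → ℝ := fun i => v i * |v i| with hw
  have hwker : w ∈ LinearMap.ker A.mulVecLin := by
    simp only [LinearMap.mem_ker]
    funext j
    have := congrFun hfv j
    rw [hf] at this
    simpa [Matrix.mulVecLin, Matrix.mulVec, dotProduct, hw] using this
  have hbker' : b ∈ LinearMap.ker A.mulVecLin := by
    simp only [LinearMap.mem_ker]
    funext j
    simpa [Matrix.mulVecLin, Matrix.mulVec, dotProduct] using hbker j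
  have hrank' : Module.finrank ℝ (LinearMap.range A.mulVecLin) = m := hrank
  have hker : Module.finrank ℝ (LinearMap.ker A.mulVecLin) = 1 := by
    have h1 := LinearMap.finrank_range_add_finrank_ker A.mulVecLin
    rw [hrank', Module.finrank_fintype_fun_eq_card, Fintype.card_fin] at h1
    omega
  set bK : LinearMap.ker A.mulVecLin := ⟨b, hbker'⟩ with hbK
  have hbKne : bK ≠ 0 := by
    intro h
    exact hb0 (congrArg Subtype.val h)
  obtain ⟨c, hc⟩ := (finrank_eq_one_iff_of_nonzero' bK hbKne).mp hker ⟨w, hwker⟩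
  have hcb : ∀ i, c * b i = w i := by
    intro i
    exact congrFun (congrArg Subtype.val hc) i
  have hc0 : c ≠ 0 := by
    intro h
    have := hcb 0
    rw [h, zero_mul] at this
    exact mul_ne_zero (hv 0) (abs_ne_zero.mpr (hv 0)) this.symm
  rcases lt_or_gt_of_ne hc0 with hneg | hpos
  · right
    intro i
    have : Real.sign (v i) = Real.sign (c * b i) := by
      rw [hcb i, hw]; exact (sign_self_mul_abs (v i)).symm
    rw [this, show c * b i = -((-c) * b i) by ring, Real.sign_neg,
      sign_mul_pos_left (-c) (b i) (by linarith)]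
  · left
    intro i
    have : Real.sign (v i) = Real.sign (c * b i) := by
      rw [hcb i, hw]; exact (sign_self_mul_abs (v i)).symm
    rw [this, sign_mul_pos_left c (b i) hpos]
end

section
/- The logarithmic potential Φ is differentiable at every v with v_i ≠ 0 for all i, its gradient is ∇Φ(v) = (b_i / |v_i|)_{i=1}^n = D(v)⁻¹ b, and this gradient lies in the kernel of the Jacobian of f at v, i.e., A (D(v) ∇Φ(v)) = 0; hence the level sets of Φ are orthogonal to the constant-task fibers at every regular state. -/
/-!
Near a state with no zero coordinate every `sign (v i)` is locally constant, so `Φ` is locally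
`∑ i, ± b i * log (v i)`, whose partial derivatives are `± b i / v i = b i / |v i|`. Rescaling this
gradient by `D(v)` gives back `b`, which lies in the kernel of `A`.
-/

open Filter Topology

namespace Real

theorem sign_eventuallyEq_nhds {x : ℝ} (hx : x ≠ 0) : sign =ᶠ[𝓝 x] fun _ ↦ sign x := by
  rcases hx.lt_or_gt with hneg | hpos
  · filter_upwards [eventually_lt_nhds hneg] with y hy
    rw [sign_of_neg hy, sign_of_neg hneg]
  · filter_upwards [eventually_gt_nhds hpos] with y hy
    rw [sign_of_pos hy, sign_of_pos hpos]

theorem sign_mul_inv_eq_abs_inv {x : ℝ} (hx : x ≠ 0) : sign x * x⁻¹ = |x|⁻¹ := by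
  rcases hx.lt_or_gt with hneg | hpos
  · rw [sign_of_neg hneg, abs_of_neg hneg, inv_neg, neg_one_mul]
  · rw [sign_of_pos hpos, abs_of_pos hpos, one_mul]

theorem hasDerivAt_sign_mul_log_abs {x : ℝ} (hx : x ≠ 0) :
    HasDerivAt (fun y ↦ sign y * log |y|) |x|⁻¹ x := by
  have hlog : HasDerivAt (fun y ↦ sign x * log y) (sign x * x⁻¹) x :=
    (hasDerivAt_log hx).const_mul (sign x)
  rw [sign_mul_inv_eq_abs_inv hx] at hlog
  refine hlog.congr_of_eventuallyEq ?_
  filter_upwards [sign_eventuallyEq_nhds hx] with y hy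
  rw [hy, log_abs]

end Real

theorem hasFDerivAt_sum_mul_sign_mul_log_abs {ι : Type*} [Fintype ι] (b v : ι → ℝ)
    (hv : ∀ i, v i ≠ 0) :
    HasFDerivAt (fun x : ι → ℝ ↦ ∑ i, b i * Real.sign (x i) * Real.log |x i|)
      (∑ i, (b i / |v i|) • ContinuousLinearMap.proj (R := ℝ) (φ := fun _ : ι ↦ ℝ) i) v := by
  refine HasFDerivAt.fun_sum fun i _ ↦ ?_
  have hcoord := (Real.hasDerivAt_sign_mul_log_abs (hv i)).comp_hasFDerivAt v
    (hasFDerivAt_apply (𝕜 := ℝ) i v)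
  simpa only [mul_assoc, div_eq_mul_inv, mul_smul, Function.comp_def] using hcoord.const_mul (b i)

theorem stmt_12_general (m : ℕ)
    (A : Matrix (Fin m) (Fin (m + 1)) ℝ)
    (b : Fin (m + 1) → ℝ)
    (hbker : ∀ j, ∑ i, A j i * b i = 0)
    (Φ : (Fin (m + 1) → ℝ) → ℝ)
    (hΦ : ∀ v, Φ v = ∑ i, b i * Real.sign (v i) * Real.log |v i|) :
    ∀ v : Fin (m + 1) → ℝ, (∀ i, v i ≠ 0) →
      DifferentiableAt ℝ Φ v ∧
      (∀ u : Fin (m + 1) → ℝ, fderiv ℝ Φ v u = ∑ i, (b i / |v i|) * u i) ∧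
      (∀ j, ∑ i, A j i * (|v i| * (b i / |v i|)) = 0) := by
  intro v hv
  obtain rfl : Φ = fun x ↦ ∑ i, b i * Real.sign (x i) * Real.log |x i| := funext hΦ
  have hderiv := hasFDerivAt_sum_mul_sign_mul_log_abs b v hv
  refine ⟨hderiv.differentiableAt, fun u ↦ ?_, fun j ↦ ?_⟩
  · rw [hderiv.fderiv]
    simp
  · simpa only [mul_div_cancel₀ _ (abs_ne_zero.mpr (hv _))] using hbker j

/-- The logarithmic potential Φ is differentiable at every regular state, its
gradient is D(v)⁻¹ b, and this gradient lies in the kernel of the Jacobian of f. -/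
theorem stmt_12 (m : ℕ) (hm : 1 ≤ m)
    (A : Matrix (Fin m) (Fin (m + 1)) ℝ)
    (f : (Fin (m + 1) → ℝ) → Fin m → ℝ)
    (hf : ∀ v j, f v j = ∑ i, A j i * (v i * |v i|))
    (b : Fin (m + 1) → ℝ) (hb0 : b ≠ 0)
    (hbker : ∀ j, ∑ i, A j i * b i = 0)
    (hbi : ∀ i, b i ≠ 0)
    (Φ : (Fin (m + 1) → ℝ) → ℝ)
    (hΦ : ∀ v, Φ v = ∑ i, b i * Real.sign (v i) * Real.log |v i|) :
    ∀ v : Fin (m + 1) → ℝ, (∀ i, v i ≠ 0) →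
      DifferentiableAt ℝ Φ v ∧
      (∀ u : Fin (m + 1) → ℝ, fderiv ℝ Φ v u = ∑ i, (b i / |v i|) * u i) ∧
      (∀ j, ∑ i, A j i * (|v i| * (b i / |v i|)) = 0) :=
  stmt_12_general m A b hbker Φ hΦ
end

section
/- Transverse monotonicity of the potential along fibers: for every λ ∈ ℝ with x₀_i + λ b_i ≠ 0 for all i, the function λ ↦ Φ(γ(λ)) is differentiable at λ with derivative Σ_{i=1}^n b_i² / (2 |x₀_i + λ b_i|) > 0; consequently λ ↦ Φ(γ(λ)) is strictly increasing on every open interval on which all components x₀_i + λ b_i are nonzero. -/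
/-!
The `i`-th coordinate of `γ λ` is the signed square root of `u_i(λ) = x₀_i + λ b_i`, so the
`i`-th term of `Φ (γ λ)` is `b_i / 2 · sign u_i · log |u_i|`. Away from the zeros of `u_i` the sign
is locally constant, so this term has derivative `b_i / 2 · sign u_i · b_i / u_i = b_i² / (2 |u_i|)`,
which is nonnegative and positive for some `i` since `b ≠ 0`.
-/

open Real Filter Topology Finset

lemma sign_mul_log_abs_sign_mul_sqrt_abs (x : ℝ) :
    sign (sign x * √|x|) * log |sign x * √(|x|)| = sign x * log |x| / 2 := by
  rcases eq_or_ne x 0 with rfl | hx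
  · simp
  have hsqrt : 0 < √|x| := sqrt_pos.mpr (abs_pos.mpr hx)
  rcases sign_apply_eq_of_ne_zero x hx with hs | hs <;>
    simp [hs, sign_of_pos hsqrt, sign_of_neg (neg_neg_of_pos hsqrt), abs_of_pos hsqrt,
      log_sqrt (abs_nonneg x), neg_div]

lemma eventually_sign_eq {u : ℝ → ℝ} {x : ℝ} (hu : ContinuousAt u x) (hx : u x ≠ 0) :
    ∀ᶠ l in 𝓝 x, sign (u l) = sign (u x) := by
  rcases hx.lt_or_gt with hneg | hpos
  · exact (hu.eventually (gt_mem_nhds hneg)).mono fun l hl => by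
      rw [sign_of_neg hl, sign_of_neg hneg]
  · exact (hu.eventually (lt_mem_nhds hpos)).mono fun l hl => by
      rw [sign_of_pos hl, sign_of_pos hpos]

lemma sign_mul_div_self {a : ℝ} (c : ℝ) (ha : a ≠ 0) : sign a * (c / a) = c / |a| := by
  rcases ha.lt_or_gt with hneg | hpos
  · rw [sign_of_neg hneg, abs_of_neg hneg, div_neg, neg_one_mul]
  · rw [sign_of_pos hpos, abs_of_pos hpos, one_mul]

lemma hasDerivAt_sign_mul_log_abs {u : ℝ → ℝ} {u' x : ℝ} (hu : HasDerivAt u u' x)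
    (hx : u x ≠ 0) : HasDerivAt (fun l => sign (u l) * log |u l|) (u' / |u x|) x := by
  have hlog : HasDerivAt (fun l => sign (u x) * log |u l|) (sign (u x) * (u' / u x)) x := by
    simpa only [log_abs] using (hu.log hx).const_mul (sign (u x))
  rw [← sign_mul_div_self u' hx]
  refine hlog.congr_of_eventuallyEq ?_
  filter_upwards [eventually_sign_eq hu.continuousAt hx] with l hl
  rw [hl]

theorem stmt_13_general (m : ℕ)
    (b : Fin (m + 1) → ℝ) (hb0 : b ≠ 0)
    (x₀ : Fin (m + 1) → ℝ)
    (γ : ℝ → Fin (m + 1) → ℝ)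
    (hγ : ∀ lam i, γ lam i =
      Real.sign (x₀ i + lam * b i) * Real.sqrt |x₀ i + lam * b i|)
    (Φ : (Fin (m + 1) → ℝ) → ℝ)
    (hΦ : ∀ v, Φ v = ∑ i, b i * Real.sign (v i) * Real.log |v i|) :
    (∀ lam : ℝ, (∀ i, x₀ i + lam * b i ≠ 0) →
      HasDerivAt (fun l => Φ (γ l))
        (∑ i, (b i) ^ 2 / (2 * |x₀ i + lam * b i|)) lam ∧
      0 < ∑ i, (b i) ^ 2 / (2 * |x₀ i + lam * b i|)) ∧
    (∀ s t : ℝ, s < t →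
      (∀ lam ∈ Set.Ioo s t, ∀ i, x₀ i + lam * b i ≠ 0) →
      StrictMonoOn (fun l => Φ (γ l)) (Set.Ioo s t)) := by
  have hpot : (fun l => Φ (γ l)) =
      fun l => ∑ i, b i / 2 * (sign (x₀ i + l * b i) * log |x₀ i + l * b i|) := by
    funext l
    refine (hΦ _).trans (sum_congr rfl fun i _ => ?_)
    rw [hγ, mul_assoc, sign_mul_log_abs_sign_mul_sqrt_abs]
    ring
  have hderiv : ∀ lam, (∀ i, x₀ i + lam * b i ≠ 0) →
      HasDerivAt (fun l => Φ (γ l)) (∑ i, (b i) ^ 2 / (2 * |x₀ i + lam * b i|)) lam := by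
    intro lam h
    rw [hpot]
    refine HasDerivAt.fun_sum fun i _ => ?_
    have hu : HasDerivAt (fun l => x₀ i + l * b i) (b i) lam :=
      (hasDerivAt_mul_const (b i)).const_add (x₀ i)
    exact ((hasDerivAt_sign_mul_log_abs hu (h i)).const_mul (b i / 2)).congr_deriv (by ring)
  have hpos : ∀ lam, (∀ i, x₀ i + lam * b i ≠ 0) →
      0 < ∑ i, (b i) ^ 2 / (2 * |x₀ i + lam * b i|) := by
    intro lam h
    obtain ⟨j, hj⟩ : ∃ j, b j ≠ 0 := Function.ne_iff.mp hb0
    have := abs_pos.mpr (h j)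
    exact sum_pos' (fun i _ => by positivity) ⟨j, mem_univ j, by positivity⟩
  refine ⟨fun lam h => ⟨hderiv lam h, hpos lam h⟩, fun s t _ h => ?_⟩
  rw [← interior_Ioo] at h
  refine strictMonoOn_of_hasDerivWithinAt_pos (convex_Ioo s t) (fun x hx => ?_)
    (fun x hx => (hderiv x (h x hx)).hasDerivWithinAt) (fun x hx => hpos x (h x hx))
  rw [← interior_Ioo] at hx
  exact (hderiv x (h x hx)).continuousAt.continuousWithinAt

/-- Transverse monotonicity of the potential along fibers. -/
theorem stmt_13 (m : ℕ) (hm : 1 ≤ m)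
    (A : Matrix (Fin m) (Fin (m + 1)) ℝ)
    (b : Fin (m + 1) → ℝ) (hb0 : b ≠ 0)
    (hbker : ∀ j, ∑ i, A j i * b i = 0)
    (hbi : ∀ i, b i ≠ 0)
    (w : Fin m → ℝ) (x₀ : Fin (m + 1) → ℝ)
    (hx₀ : ∀ j, ∑ i, A j i * x₀ i = w j)
    (γ : ℝ → Fin (m + 1) → ℝ)
    (hγ : ∀ lam i, γ lam i =
      Real.sign (x₀ i + lam * b i) * Real.sqrt |x₀ i + lam * b i|)
    (Φ : (Fin (m + 1) → ℝ) → ℝ)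
    (hΦ : ∀ v, Φ v = ∑ i, b i * Real.sign (v i) * Real.log |v i|) :
    (∀ lam : ℝ, (∀ i, x₀ i + lam * b i ≠ 0) →
      HasDerivAt (fun l => Φ (γ l))
        (∑ i, (b i) ^ 2 / (2 * |x₀ i + lam * b i|)) lam ∧
      0 < ∑ i, (b i) ^ 2 / (2 * |x₀ i + lam * b i|)) ∧
    (∀ s t : ℝ, s < t →
      (∀ lam ∈ Set.Ioo s t, ∀ i, x₀ i + lam * b i ≠ 0) →
      StrictMonoOn (fun l => Φ (γ l)) (Set.Ioo s t)) :=
  stmt_13_general m b hb0 x₀ γ hγ Φ hΦ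
end

section
/- Potential limits at orthant boundaries: let λ* ∈ ℝ be such that the set J = {i : x₀_i + λ* b_i = 0} is nonempty and is a proper subset of {1, …, n}. Then Φ(γ(λ)) → −∞ as λ → λ* from above, and Φ(γ(λ)) → +∞ as λ → λ* from below. -/
open Filter Real Set

private lemma sumAtBot {ι α : Type*} {l : Filter α} (s : Finset ι)
    (hs : s.Nonempty) (f : ι → α → ℝ)
    (h : ∀ i ∈ s, Filter.Tendsto (f i) l Filter.atBot) :
    Filter.Tendsto (fun x => ∑ i ∈ s, f i x) l Filter.atBot := by
  classical
  obtain ⟨j, hj⟩ := hs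
  have hev : ∀ᶠ x in l, ∀ i ∈ s.erase j, f i x ≤ 0 := by
    rw [Filter.eventually_all_finset]
    exact fun i hi => (h i (Finset.mem_of_mem_erase hi)).eventually_le_atBot 0
  refine tendsto_atBot_mono' l ?_ (h j hj)
  filter_upwards [hev] with x hx
  calc ∑ i ∈ s, f i x = f j x + ∑ i ∈ s.erase j, f i x := (Finset.add_sum_erase s (fun i => f i x) hj).symm
    _ ≤ f j x + 0 := by
        have := Finset.sum_nonpos hx
        linarith
    _ = f j x := add_zero _

private lemma sumAtTop {ι α : Type*} {l : Filter α} (s : Finset ι)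
    (hs : s.Nonempty) (f : ι → α → ℝ)
    (h : ∀ i ∈ s, Filter.Tendsto (f i) l Filter.atTop) :
    Filter.Tendsto (fun x => ∑ i ∈ s, f i x) l Filter.atTop := by
  classical
  obtain ⟨j, hj⟩ := hs
  have hev : ∀ᶠ x in l, ∀ i ∈ s.erase j, 0 ≤ f i x := by
    rw [Filter.eventually_all_finset]
    exact fun i hi => (h i (Finset.mem_of_mem_erase hi)).eventually_ge_atTop 0
  refine tendsto_atTop_mono' l ?_ (h j hj)
  filter_upwards [hev] with x hx
  calc f j x = f j x + 0 := (add_zero _).symm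
    _ ≤ f j x + ∑ i ∈ s.erase j, f i x := by
        have := Finset.sum_nonneg hx
        linarith
    _ = ∑ i ∈ s, f i x := Finset.add_sum_erase s (fun i => f i x) hj

/-- Potential limits at orthant boundaries: Φ(γ(λ)) → −∞ as λ → λ*⁺ and
Φ(γ(λ)) → +∞ as λ → λ*⁻. -/
theorem stmt_14 (m : ℕ) (hm : 1 ≤ m)
    (A : Matrix (Fin m) (Fin (m + 1)) ℝ)
    (b : Fin (m + 1) → ℝ) (hb0 : b ≠ 0)
    (hbker : ∀ j, ∑ i, A j i * b i = 0)
    (hbi : ∀ i, b i ≠ 0)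
    (w : Fin m → ℝ) (x₀ : Fin (m + 1) → ℝ)
    (hx₀ : ∀ j, ∑ i, A j i * x₀ i = w j)
    (γ : ℝ → Fin (m + 1) → ℝ)
    (hγ : ∀ lam i, γ lam i =
      Real.sign (x₀ i + lam * b i) * Real.sqrt |x₀ i + lam * b i|)
    (Φ : (Fin (m + 1) → ℝ) → ℝ)
    (hΦ : ∀ v, Φ v = ∑ i, b i * Real.sign (v i) * Real.log |v i|)
    (lamStar : ℝ) (J : Set (Fin (m + 1)))
    (hJ : J = {i | x₀ i + lamStar * b i = 0})
    (hJne : J.Nonempty) (hJproper : J ≠ Set.univ) :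
    Filter.Tendsto (fun lam => Φ (γ lam))
      (nhdsWithin lamStar (Set.Ioi lamStar)) Filter.atBot ∧
    Filter.Tendsto (fun lam => Φ (γ lam))
      (nhdsWithin lamStar (Set.Iio lamStar)) Filter.atTop := by
  classical
  set term : Fin (m + 1) → ℝ → ℝ :=
    fun i lam => b i * Real.sign (x₀ i + lam * b i) * (Real.log |x₀ i + lam * b i| / 2)
    with hterm
  -- Step 1: Φ (γ lam) = ∑ i, term i lam
  have habs : ∀ lam, Φ (γ lam) = ∑ i, term i lam := by
    intro lam
    rw [hΦ]
    refine Finset.sum_congr rfl fun i _ => ?_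
    rw [hγ]
    simp only [hterm]
    set u := x₀ i + lam * b i with hu
    have hsq : (0:ℝ) ≤ |u| := abs_nonneg u
    rcases lt_trichotomy u 0 with h | h | h
    · have hpos : 0 < Real.sqrt |u| := Real.sqrt_pos.mpr (abs_pos.mpr h.ne)
      rw [Real.sign_of_neg h, neg_one_mul, Real.sign_of_neg (neg_lt_zero.mpr hpos),
        abs_neg, abs_of_pos hpos, Real.log_sqrt hsq]
    · simp [h]
    · have hpos : 0 < Real.sqrt |u| := Real.sqrt_pos.mpr (abs_pos.mpr h.ne')
      rw [Real.sign_of_pos h, one_mul, Real.sign_of_pos hpos,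
        abs_of_pos hpos, Real.log_sqrt hsq]
  -- The finset of boundary indices
  set p : Fin (m + 1) → Prop := fun i => x₀ i + lamStar * b i = 0 with hp
  set Jf : Finset (Fin (m + 1)) := Finset.univ.filter p with hJf
  have hJfne : Jf.Nonempty := by
    obtain ⟨i, hi⟩ := hJne
    rw [hJ] at hi
    exact ⟨i, Finset.mem_filter.mpr ⟨Finset.mem_univ i, hi⟩⟩
  have hsplit : ∀ lam, Φ (γ lam) =
      (∑ i ∈ Jf, term i lam) + (∑ i ∈ Finset.univ.filter (fun i => ¬ p i), term i lam) := by
    intro lam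
    rw [habs, ← Finset.sum_filter_add_sum_filter_not Finset.univ p (fun i => term i lam)]
  -- Step 2: the non-boundary sum converges
  have hC : Filter.Tendsto
      (fun lam => ∑ i ∈ Finset.univ.filter (fun i => ¬ p i), term i lam)
      (nhds lamStar)
      (nhds (∑ i ∈ Finset.univ.filter (fun i => ¬ p i), term i lamStar)) := by
    refine tendsto_finset_sum _ fun i hi => ?_
    have hc : x₀ i + lamStar * b i ≠ 0 := by
      simp only [Finset.mem_filter] at hi; exact hi.2
    have hu : Filter.Tendsto (fun lam => x₀ i + lam * b i) (nhds lamStar)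
        (nhds (x₀ i + lamStar * b i)) :=
      ((continuous_const.add (continuous_id.mul continuous_const)).tendsto lamStar)
    have hlog : Filter.Tendsto (fun lam => Real.log |x₀ i + lam * b i|) (nhds lamStar)
        (nhds (Real.log |x₀ i + lamStar * b i|)) := by
      simp only [Real.log_abs]
      exact (Real.continuousAt_log hc).tendsto.comp hu
    have hsign : ∀ᶠ lam in nhds lamStar,
        Real.sign (x₀ i + lam * b i) = Real.sign (x₀ i + lamStar * b i) := by
      rcases lt_or_gt_of_ne hc with h | h
      · filter_upwards [hu.eventually (eventually_lt_nhds h)] with lam hlam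
        rw [Real.sign_of_neg hlam, Real.sign_of_neg h]
      · filter_upwards [hu.eventually (eventually_gt_nhds h)] with lam hlam
        rw [Real.sign_of_pos hlam, Real.sign_of_pos h]
    have hbase : Filter.Tendsto
        (fun lam => b i * Real.sign (x₀ i + lamStar * b i) * (Real.log |x₀ i + lam * b i| / 2))
        (nhds lamStar) (nhds (term i lamStar)) :=
      (hlog.div_const 2).const_mul _
    refine hbase.congr' ?_
    filter_upwards [hsign] with lam hlam
    simp only [hterm, hlam]
  -- Step 3: log |lam - lamStar| → -∞ near lamStar (punctured)
  have hlogNe : Filter.Tendsto (fun lam => Real.log |lam - lamStar|)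
      (nhdsWithin lamStar {lamStar}ᶜ) Filter.atBot := by
    have h0 : Filter.Tendsto (fun lam => |lam - lamStar|)
        (nhdsWithin lamStar {lamStar}ᶜ) (nhdsWithin 0 (Set.Ioi 0)) := by
      rw [tendsto_nhdsWithin_iff]
      constructor
      · have h1 : Filter.Tendsto (fun lam => |lam - lamStar|) (nhds lamStar) (nhds 0) := by
          have : Continuous (fun lam : ℝ => |lam - lamStar|) :=
            (continuous_id.sub continuous_const).abs
          simpa using this.tendsto lamStar
        exact h1.mono_left nhdsWithin_le_nhds
      · filter_upwards [self_mem_nhdsWithin] with x hx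
        exact abs_pos.mpr (sub_ne_zero.mpr hx)
    exact Real.tendsto_log_nhdsGT_zero.comp h0
  -- representation on the boundary indices
  have hrep : ∀ i ∈ Jf, ∀ lam, x₀ i + lam * b i = (lam - lamStar) * b i := by
    intro i hi lam
    have h0 : x₀ i + lamStar * b i = 0 := by
      simp only [hJf, hp, Finset.mem_filter] at hi; exact hi.2
    linear_combination h0
  -- generic divergence of log part on each punctured side
  have hlogpart : ∀ (s : Set ℝ), s ⊆ {lamStar}ᶜ → ∀ i : Fin (m + 1),
      Filter.Tendsto (fun lam => (Real.log |lam - lamStar| + Real.log |b i|) / 2)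
        (nhdsWithin lamStar s) Filter.atBot := by
    intro s hs i
    have h1 := hlogNe.mono_left (nhdsWithin_mono _ hs)
    exact (tendsto_atBot_add_const_right _ (Real.log |b i|) h1).atBot_div_const two_pos
  have hlogmul : ∀ i ∈ Jf, ∀ lam, lam ≠ lamStar →
      Real.log |x₀ i + lam * b i| = Real.log |lam - lamStar| + Real.log |b i| := by
    intro i hi lam hlam
    rw [hrep i hi lam, abs_mul,
      Real.log_mul (abs_ne_zero.mpr (sub_ne_zero.mpr hlam)) (abs_ne_zero.mpr (hbi i))]
  constructor
  · -- right limit: atBot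
    have hJsum : Filter.Tendsto (fun lam => ∑ i ∈ Jf, term i lam)
        (nhdsWithin lamStar (Set.Ioi lamStar)) Filter.atBot := by
      refine sumAtBot Jf hJfne term fun i hi => ?_
      have hbody := (hlogpart (Set.Ioi lamStar) (fun x hx => ne_of_gt hx) i).const_mul_atBot
        (abs_pos.mpr (hbi i))
      refine hbody.congr' ?_
      filter_upwards [self_mem_nhdsWithin] with lam hlam
      have hlt : lamStar < lam := hlam
      simp only [hterm]
      have hsg : b i * Real.sign (x₀ i + lam * b i) = |b i| := by
        rw [hrep i hi lam]
        rcases lt_or_gt_of_ne (hbi i) with h | h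
        · rw [Real.sign_of_neg (mul_neg_of_pos_of_neg (sub_pos.mpr hlt) h), abs_of_neg h]
          ring
        · rw [Real.sign_of_pos (mul_pos (sub_pos.mpr hlt) h), abs_of_pos h]
          ring
      rw [hlogmul i hi lam (ne_of_gt hlt)]
      rw [hsg]
    have htot := (hC.mono_left nhdsWithin_le_nhds).add_atBot hJsum
    refine htot.congr fun lam => ?_
    rw [hsplit lam, add_comm]
  · -- left limit: atTop
    have hJsum : Filter.Tendsto (fun lam => ∑ i ∈ Jf, term i lam)
        (nhdsWithin lamStar (Set.Iio lamStar)) Filter.atTop := by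
      refine sumAtTop Jf hJfne term fun i hi => ?_
      have hbody := (hlogpart (Set.Iio lamStar) (fun x hx => ne_of_lt hx) i).const_mul_atBot_of_neg
        (neg_lt_zero.mpr (abs_pos.mpr (hbi i)))
      refine hbody.congr' ?_
      filter_upwards [self_mem_nhdsWithin] with lam hlam
      have hlt : lam < lamStar := hlam
      simp only [hterm]
      have hsg : b i * Real.sign (x₀ i + lam * b i) = -|b i| := by
        rw [hrep i hi lam]
        rcases lt_or_gt_of_ne (hbi i) with h | h
        · rw [Real.sign_of_pos (mul_pos_of_neg_of_neg (sub_neg.mpr hlt) h), abs_of_neg h]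
          ring
        · rw [Real.sign_of_neg (mul_neg_of_neg_of_pos (sub_neg.mpr hlt) h), abs_of_pos h]
          ring
      rw [hlogmul i hi lam (ne_of_lt hlt)]
      rw [hsg]
    have htot := (hC.mono_left nhdsWithin_le_nhds).add_atTop hJsum
    refine htot.congr fun lam => ?_
    rw [hsplit lam, add_comm]
end

section
/- Tangency of fibers at hinges: let σ ∈ {−1, 1}^n be a sign vector and suppose there exist λ* ∈ ℝ and two distinct indices i ≠ j with x₀_i + λ* b_i = 0, x₀_j + λ* b_j = 0, σ_i b_i > 0 and σ_j b_j < 0. Then the fiber never enters the open orthant determined by σ: for every λ ∈ ℝ there exists an index k with σ_k · γ(λ)_k ≤ 0. -/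
lemma aux_sign_sqrt_s15 (s t : ℝ) (hs : s = 1 ∨ s = -1) (h : s * t ≤ 0) :
    s * (Real.sign t * Real.sqrt |t|) ≤ 0 := by
  rw [← mul_assoc]
  apply mul_nonpos_of_nonpos_of_nonneg _ (Real.sqrt_nonneg _)
  rcases lt_trichotomy t 0 with ht | ht | ht
  · rw [Real.sign_of_neg ht]
    rcases hs with h1 | h1 <;> nlinarith
  · simp [ht]
  · rw [Real.sign_of_pos ht]
    rcases hs with h1 | h1 <;> nlinarith

/-- Tangency of fibers at hinges: if the fiber hits a hinge of the orthant
determined by σ, it never enters the open orthant determined by σ. -/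
theorem stmt_15 (m : ℕ) (hm : 1 ≤ m)
    (A : Matrix (Fin m) (Fin (m + 1)) ℝ)
    (b : Fin (m + 1) → ℝ) (hb0 : b ≠ 0)
    (hbker : ∀ j, ∑ i, A j i * b i = 0)
    (hbi : ∀ i, b i ≠ 0)
    (w : Fin m → ℝ) (x₀ : Fin (m + 1) → ℝ)
    (hx₀ : ∀ j, ∑ i, A j i * x₀ i = w j)
    (γ : ℝ → Fin (m + 1) → ℝ)
    (hγ : ∀ lam i, γ lam i =
      Real.sign (x₀ i + lam * b i) * Real.sqrt |x₀ i + lam * b i|)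
    (σ : Fin (m + 1) → ℝ) (hσ : ∀ k, σ k = 1 ∨ σ k = -1)
    (lamStar : ℝ) (i j : Fin (m + 1)) (hij : i ≠ j)
    (hi0 : x₀ i + lamStar * b i = 0) (hj0 : x₀ j + lamStar * b j = 0)
    (hin : 0 < σ i * b i) (hout : σ j * b j < 0) :
    ∀ lam : ℝ, ∃ k : Fin (m + 1), σ k * γ lam k ≤ 0 := by
  intro lam
  rcases le_or_gt lamStar lam with hl | hl
  · refine ⟨j, ?_⟩
    rw [hγ]
    apply aux_sign_sqrt_s15 _ _ (hσ j)
    have e : σ j * (x₀ j + lam * b j)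
        = (lam - lamStar) * (σ j * b j) + σ j * (x₀ j + lamStar * b j) := by ring
    rw [e, hj0, mul_zero, add_zero]
    exact mul_nonpos_of_nonneg_of_nonpos (by linarith) hout.le
  · refine ⟨i, ?_⟩
    rw [hγ]
    apply aux_sign_sqrt_s15 _ _ (hσ i)
    have e : σ i * (x₀ i + lam * b i)
        = (lam - lamStar) * (σ i * b i) + σ i * (x₀ i + lamStar * b i) := by ring
    rw [e, hi0, mul_zero, add_zero]
    exact mul_nonpos_of_nonpos_of_nonneg (by linarith) hin.le
end

section
/- Existence of a globally singularity-free right-inverse: for every task w ∈ ℝ^m and every potential level C ∈ ℝ, there exists a unique v ∈ ℝ^n such that sign(v_i) = sign(b_i) for all i (v lies in the open positive extremal orthant), f(v) = w, and Φ(v) = C. In particular, for each fixed C the restriction of f to the level set {v in the open positive extremal orthant : Φ(v) = C} is a bijection onto ℝ^m. -/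
/-- The map `x ↦ x * |x|` is strictly monotone. -/
lemma stmt19_mulabs_strictMono : StrictMono (fun x : ℝ => x * |x|) := by
  intro x y hxy
  rcases le_or_gt 0 x with hx | hx
  · have hy : 0 < y := lt_of_le_of_lt hx hxy
    simp only [abs_of_nonneg hx, abs_of_pos hy]
    nlinarith
  · rcases le_or_gt 0 y with hy | hy
    · simp only [abs_of_neg hx, abs_of_nonneg hy]
      nlinarith
    · simp only [abs_of_neg hx, abs_of_neg hy]
      nlinarith

/-- `sign r * r = |r|`. -/
lemma stmt19_sign_mul_self (r : ℝ) : Real.sign r * r = |r| := by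
  rcases lt_trichotomy r 0 with h | h | h
  · rw [Real.sign_of_neg h, abs_of_neg h]; ring
  · simp [h]
  · rw [Real.sign_of_pos h, abs_of_pos h]; ring

/-- Sign of a positive multiple of a sign. -/
lemma stmt19_sign_sign_mul {c x : ℝ} (hc : c ≠ 0) (hx : 0 < x) :
    Real.sign (Real.sign c * x) = Real.sign c := by
  rcases Real.sign_apply_eq_of_ne_zero c hc with h | h
  · rw [h]
    have : (-1 : ℝ) * x = -x := by ring
    rw [this, Real.sign_neg, Real.sign_of_pos hx]
  · rw [h, one_mul, Real.sign_of_pos hx]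

set_option maxHeartbeats 1000000 in
/-- Existence of a globally singularity-free right-inverse: for every task w and
potential level C there is a unique state in the open positive extremal orthant
realising the task and the potential level. -/
theorem stmt_19 (m : ℕ) (hm : 1 ≤ m)
    (A : Matrix (Fin m) (Fin (m + 1)) ℝ) (hrank : A.rank = m)
    (f : (Fin (m + 1) → ℝ) → Fin m → ℝ)
    (hf : ∀ v j, f v j = ∑ i, A j i * (v i * |v i|))
    (b : Fin (m + 1) → ℝ) (hb0 : b ≠ 0)
    (hbker : ∀ j, ∑ i, A j i * b i = 0)
    (hbi : ∀ i, b i ≠ 0)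
    (Φ : (Fin (m + 1) → ℝ) → ℝ)
    (hΦ : ∀ v, Φ v = ∑ i, b i * Real.sign (v i) * Real.log |v i|) :
    ∀ (w : Fin m → ℝ) (C : ℝ),
      ∃! v : Fin (m + 1) → ℝ,
        (∀ i, Real.sign (v i) = Real.sign (b i)) ∧ f v = w ∧ Φ v = C := by
  intro w C
  classical
  set s : Fin (m + 1) → ℝ := fun i => Real.sign (b i) with hs
  set c : Fin (m + 1) → ℝ := fun i => |b i| with hcdef
  have hc : ∀ i, 0 < c i := fun i => abs_pos.2 (hbi i)
  have hsb : ∀ i, s i * b i = c i := fun i => stmt19_sign_mul_self (b i)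
  have hss : ∀ i, s i * s i = 1 := by
    intro i
    rcases Real.sign_apply_eq_of_ne_zero (b i) (hbi i) with h | h <;>
      simp [hs, h]
  -- the linear map associated to A
  have hL : ∀ (x : Fin (m + 1) → ℝ) (j : Fin m),
      A.mulVecLin x j = ∑ i, A j i * x i := by
    intro x j
    simp [Matrix.mulVecLin_apply, Matrix.mulVec, dotProduct]
  have hfin : Module.finrank ℝ (LinearMap.range A.mulVecLin) = m := hrank
  have hrange : LinearMap.range A.mulVecLin = ⊤ := by
    apply Submodule.eq_top_of_finrank_eq
    rw [hfin, Module.finrank_fin_fun]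
  have hbmem : b ∈ LinearMap.ker A.mulVecLin := by
    rw [LinearMap.mem_ker]
    funext j
    rw [hL b j]
    exact hbker j
  have hker : LinearMap.ker A.mulVecLin = Submodule.span ℝ {b} := by
    symm
    apply Submodule.eq_of_le_of_finrank_le
    · rw [Submodule.span_le, Set.singleton_subset_iff]
      exact hbmem
    · have h1 := LinearMap.finrank_range_add_finrank_ker A.mulVecLin
      rw [hfin, Module.finrank_fin_fun] at h1
      rw [finrank_span_singleton hb0]
      omega
  -- particular solution
  obtain ⟨y0, hy0⟩ := (LinearMap.range_eq_top.mp hrange) w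
  set a : Fin (m + 1) → ℝ := fun i => s i * y0 i with ha
  have hne : (Finset.univ : Finset (Fin (m + 1))).Nonempty := Finset.univ_nonempty
  set T : ℝ := Finset.univ.sup' hne (fun i => -a i / c i) with hT
  obtain ⟨i0, -, hi0⟩ := Finset.exists_mem_eq_sup' hne (fun i => -a i / c i)
  have hkey : a i0 + T * c i0 = 0 := by
    rw [hT, hi0, div_mul_cancel₀ _ (hc i0).ne']
    ring
  have hTge : ∀ i, 0 ≤ a i + T * c i := by
    intro i
    have h := Finset.le_sup' (fun i => -a i / c i) (Finset.mem_univ i)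
    rw [← hT] at h
    rw [div_le_iff₀ (hc i)] at h
    linarith
  have hargpos : ∀ t, T < t → ∀ i, 0 < a i + t * c i := by
    intro t ht i
    have h1 := hTge i
    nlinarith [hc i]
  set g : ℝ → ℝ := fun t => ∑ i, c i * Real.log (a i + t * c i) with hg
  have hgmono : StrictMonoOn g (Set.Ioi T) := by
    intro t1 ht1 t2 ht2 hlt
    apply Finset.sum_lt_sum_of_nonempty hne
    intro i _
    have h1 := hargpos t1 ht1 i
    apply mul_lt_mul_of_pos_left _ (hc i)
    apply Real.log_lt_log h1
    nlinarith [hc i]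
  have hgcont : ContinuousOn g (Set.Ioi T) := by
    apply continuousOn_finset_sum
    intro i _
    apply ContinuousOn.mul continuousOn_const
    apply ContinuousOn.log
    · exact (Continuous.continuousOn (by continuity))
    · intro t ht
      exact (hargpos t ht i).ne'
  -- small value
  set K : ℝ := c i0 * Real.log (c i0) +
      ∑ i ∈ Finset.univ.erase i0, c i * Real.log (a i + (T + 1) * c i) with hK
  set ε : ℝ := min 1 (Real.exp ((2 * C - K) / c i0)) with hε
  have hε0 : 0 < ε := lt_min one_pos (Real.exp_pos _)
  have hε1 : ε ≤ 1 := min_le_left _ _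
  set t1 : ℝ := T + ε with ht1def
  have ht1T : T < t1 := by simp [ht1def, hε0]
  have hgt1 : g t1 ≤ 2 * C := by
    have hsplit : g t1 = c i0 * Real.log (a i0 + t1 * c i0) +
        ∑ i ∈ Finset.univ.erase i0, c i * Real.log (a i + t1 * c i) :=
      (Finset.add_sum_erase _ (fun i => c i * Real.log (a i + t1 * c i))
        (Finset.mem_univ i0)).symm
    have harg0 : a i0 + t1 * c i0 = ε * c i0 := by
      rw [ht1def]; nlinarith [hkey]
    have hterm0 : c i0 * Real.log (a i0 + t1 * c i0) ≤ (2 * C - K) + c i0 * Real.log (c i0) := by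
      rw [harg0, Real.log_mul hε0.ne' (hc i0).ne', mul_add]
      have hlogε : Real.log ε ≤ (2 * C - K) / c i0 := by
        calc Real.log ε ≤ Real.log (Real.exp ((2 * C - K) / c i0)) :=
              Real.log_le_log hε0 (min_le_right _ _)
          _ = (2 * C - K) / c i0 := Real.log_exp _
      have := mul_le_mul_of_nonneg_left hlogε (hc i0).le
      have heq : c i0 * ((2 * C - K) / c i0) = 2 * C - K := by
        rw [mul_comm]; exact div_mul_cancel₀ _ (hc i0).ne'
      linarith [heq ▸ this]
    have hrest : ∑ i ∈ Finset.univ.erase i0, c i * Real.log (a i + t1 * c i) ≤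
        ∑ i ∈ Finset.univ.erase i0, c i * Real.log (a i + (T + 1) * c i) := by
      apply Finset.sum_le_sum
      intro i _
      apply mul_le_mul_of_nonneg_left _ (hc i).le
      apply Real.log_le_log (hargpos t1 ht1T i)
      rw [ht1def]
      nlinarith [hc i]
    rw [hsplit]
    have : K = c i0 * Real.log (c i0) +
        ∑ i ∈ Finset.univ.erase i0, c i * Real.log (a i + (T + 1) * c i) := hK
    linarith
  -- large value
  set δ : ℝ := max (max (Finset.univ.sup' hne (fun i => 1 / c i))
      (Real.exp (2 * C / c i0) / c i0)) ε with hδ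
  have hδε : ε ≤ δ := le_max_right _ _
  set t2 : ℝ := T + δ with ht2def
  have ht2T : T < t2 := by
    have h := lt_of_lt_of_le hε0 hδε
    rw [ht2def]; linarith
  have ht12 : t1 ≤ t2 := by rw [ht1def, ht2def]; linarith
  have hgt2 : 2 * C ≤ g t2 := by
    have hterm_nonneg : ∀ i ∈ Finset.univ, 0 ≤ c i * Real.log (a i + t2 * c i) := by
      intro i _
      apply mul_nonneg (hc i).le
      apply Real.log_nonneg
      have h1 : 1 / c i ≤ δ :=
        le_trans (le_trans (Finset.le_sup' (fun i => 1 / c i) (Finset.mem_univ i))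
          (le_max_left _ _)) (le_max_left _ _)
      have h2 : (1 / c i) * c i ≤ δ * c i := mul_le_mul_of_nonneg_right h1 (hc i).le
      have h3 : (1 / c i) * c i = 1 := by
        rw [one_div, inv_mul_cancel₀ (hc i).ne']
      have h4 := hTge i
      rw [ht2def]; nlinarith [hc i]
    have hterm0 : 2 * C ≤ c i0 * Real.log (a i0 + t2 * c i0) := by
      have harg0 : a i0 + t2 * c i0 = δ * c i0 := by
        rw [ht2def]; nlinarith [hkey]
      have h1 : Real.exp (2 * C / c i0) / c i0 ≤ δ :=
        le_trans (le_max_right _ _) (le_max_left _ _)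
      have h2 : Real.exp (2 * C / c i0) ≤ δ * c i0 := by
        rw [div_le_iff₀ (hc i0)] at h1
        linarith
      have h3 : Real.log (Real.exp (2 * C / c i0)) ≤ Real.log (δ * c i0) :=
        Real.log_le_log (Real.exp_pos _) h2
      rw [Real.log_exp] at h3
      have h4 := mul_le_mul_of_nonneg_left h3 (hc i0).le
      have h5 : c i0 * (2 * C / c i0) = 2 * C := by
        rw [mul_comm]; exact div_mul_cancel₀ _ (hc i0).ne'
      rw [harg0]
      linarith [h5 ▸ h4]
    exact le_trans hterm0 (Finset.single_le_sum hterm_nonneg (Finset.mem_univ i0))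
  -- intermediate value
  have hIcc : Set.Icc t1 t2 ⊆ Set.Ioi T := fun x hx => lt_of_lt_of_le ht1T hx.1
  obtain ⟨t, htmem, hgt⟩ :=
    intermediate_value_Icc ht12 (hgcont.mono hIcc) ⟨hgt1, hgt2⟩
  have htT : T < t := hIcc htmem
  -- construct the solution
  set y : Fin (m + 1) → ℝ := fun i => y0 i + t * b i with hy
  set v : Fin (m + 1) → ℝ := fun i => s i * Real.sqrt (a i + t * c i) with hv
  have hargp : ∀ i, 0 < a i + t * c i := hargpos t htT
  have habs_s : ∀ i, |s i| = 1 := by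
    intro i
    rcases Real.sign_apply_eq_of_ne_zero (b i) (hbi i) with h | h <;> simp [hs, h]
  have hsb' : ∀ i, Real.sign (b i) * b i = c i := hsb
  have hsy : ∀ i, s i * y i = a i + t * c i := by
    intro i
    have : s i * y i = s i * y0 i + t * (s i * b i) := by rw [hy]; ring
    rw [this, hsb i, ha]
  have habsv : ∀ i, |v i| = Real.sqrt (a i + t * c i) := by
    intro i
    rw [hv, abs_mul, habs_s i, one_mul, abs_of_nonneg (Real.sqrt_nonneg _)]
  have hvv : ∀ i, v i * |v i| = y i := by
    intro i
    rw [habsv i, hv]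
    have h1 : s i * Real.sqrt (a i + t * c i) * Real.sqrt (a i + t * c i)
        = s i * (a i + t * c i) := by
      rw [mul_assoc, Real.mul_self_sqrt (hargp i).le]
    rw [h1, ← hsy i, ← mul_assoc, hss i, one_mul]
  have hsignv : ∀ i, Real.sign (v i) = Real.sign (b i) := by
    intro i
    rw [hv, hs]
    exact stmt19_sign_sign_mul (hbi i) (Real.sqrt_pos.2 (hargp i))
  have hfv : f v = w := by
    funext j
    rw [hf v j]
    have h1 : ∀ i, A j i * (v i * |v i|) = A j i * y0 i + t * (A j i * b i) := by
      intro i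
      rw [hvv i, hy]; ring
    rw [Finset.sum_congr rfl (fun i _ => h1 i), Finset.sum_add_distrib,
      ← Finset.mul_sum, hbker j, mul_zero, add_zero, ← hL y0 j, hy0]
  have hΦv : Φ v = C := by
    rw [hΦ v]
    have h1 : ∀ i, b i * Real.sign (v i) * Real.log |v i|
        = c i * Real.log (a i + t * c i) / 2 := by
      intro i
      rw [hsignv i, habsv i, Real.log_sqrt (hargp i).le, ← hsb' i]
      ring
    rw [Finset.sum_congr rfl (fun i _ => h1 i), ← Finset.sum_div]
    have h6 : (∑ i, c i * Real.log (a i + t * c i)) = 2 * C := hgt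
    rw [h6]
    ring
  refine ⟨v, ⟨hsignv, hfv, hΦv⟩, ?_⟩
  -- uniqueness
  rintro v' ⟨h1, h2, h3⟩
  have hvne : ∀ i, v' i ≠ 0 := by
    intro i hcon
    apply hbi i
    rw [← Real.sign_eq_zero_iff, ← h1 i, hcon, Real.sign_zero]
  have hsv' : ∀ i, s i * v' i = |v' i| := by
    intro i
    have h4 : Real.sign (v' i) * v' i = |v' i| := stmt19_sign_mul_self (v' i)
    rw [h1 i] at h4
    exact h4
  set y' : Fin (m + 1) → ℝ := fun i => v' i * |v' i| with hy'
  have hLy' : A.mulVecLin y' = w := by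
    funext j
    rw [hL y' j, ← hf v' j, h2]
  have hmem : y' - y0 ∈ Submodule.span ℝ {b} := by
    rw [← hker, LinearMap.mem_ker, map_sub, hLy', hy0, sub_self]
  obtain ⟨t', ht'⟩ := Submodule.mem_span_singleton.mp hmem
  have hy'eq : ∀ i, y' i = y0 i + t' * b i := by
    intro i
    have := congrFun ht' i
    simp only [Pi.smul_apply, Pi.sub_apply, smul_eq_mul] at this
    linarith
  have hsy' : ∀ i, a i + t' * c i = |v' i| * |v' i| := by
    intro i
    have h4 : s i * y' i = a i + t' * c i := by
      rw [hy'eq i]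
      have : s i * (y0 i + t' * b i) = s i * y0 i + t' * (s i * b i) := by ring
      rw [this, hsb i, ha]
    rw [← h4, hy']
    rw [show s i * (v' i * |v' i|) = (s i * v' i) * |v' i| by ring, hsv' i]
  have hargpos' : ∀ i, 0 < a i + t' * c i := by
    intro i
    rw [hsy' i]
    exact mul_pos (abs_pos.2 (hvne i)) (abs_pos.2 (hvne i))
  have ht'T : T < t' := by
    rw [hT]
    refine (Finset.sup'_lt_iff hne).mpr ?_
    intro i _
    rw [div_lt_iff₀ (hc i)]
    have := hargpos' i
    linarith
  have hgt' : g t' = 2 * C := by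
    show (∑ i, c i * Real.log (a i + t' * c i)) = 2 * C
    have h5 : ∀ i, c i * Real.log (a i + t' * c i)
        = 2 * (b i * Real.sign (v' i) * Real.log |v' i|) := by
      intro i
      rw [hsy' i, Real.log_mul (abs_ne_zero.2 (hvne i)) (abs_ne_zero.2 (hvne i)),
        h1 i, ← hsb' i]
      ring
    rw [Finset.sum_congr rfl (fun i _ => h5 i), ← Finset.mul_sum, ← hΦ v', h3]
  have htt : t' = t := hgmono.injOn (Set.mem_Ioi.2 ht'T) (Set.mem_Ioi.2 htT)
    (by rw [hgt', hgt])
  funext i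
  apply stmt19_mulabs_strictMono.injective
  show v' i * |v' i| = v i * |v i|
  rw [hvv i]
  show y' i = y i
  rw [hy'eq i, htt]
end
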